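/- Let P be a probability distribution on a finite alphabet 𝒳 and let C₁, C₂, …, C_N be i.i.d. with law P. The probability that the sequence C^N fails the prefix condition — i.e., that there exists an index i with N/ln N ≤ i ≤ N such that the empirical distribution P̂_{C^i} of the prefix C₁,…,C_i satisfies ‖P − P̂_{C^i}‖₁ > 1/ln N — tends to zero as N → ∞. -/

import Mathlib

/-!
For a fixed letter `x`, the centred counts `S_i = ∑_{k<i} (1{C_k = x} - P x)` satisfy
`E S_i⁴ ≤ 4 i²` (induction on `i`, together with `E S_i² ≤ i`), so by Markov's inequality for
`S_i⁴` the deviation `|P̂_{C^i}(x) - P x|` exceeds `δ` with probability at most `4 / (i² δ⁴)`.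
A union bound over the `K = |𝒳|` letters with `δ = ε / K`, and over the at most `N + 1` lengths
`i ≥ N / ln N`, with `ε = 1 / ln N`, bounds the failure probability by `8 K⁵ (ln N)⁶ / N → 0`.
-/

open scoped BigOperators

namespace Async

variable {X : Type*}

/-- `μ` is a probability distribution on a finite alphabet. -/
def IsDist {A : Type*} [Fintype A] (μ : A → ℝ) : Prop :=
  (∀ a, 0 ≤ μ a) ∧ ∑ a, μ a = 1

open scoped Classical in
/-- Real-valued indicator of a proposition. -/
noncomputable def ind (p : Prop) : ℝ := if p then 1 else 0

open scoped Classical in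
/-- Empirical distribution of the prefix of length `i` of a sequence of length `N`. -/
noncomputable def empPrefix {N : ℕ} (c : Fin N → X) (i : ℕ) (x : X) : ℝ :=
  ((Finset.univ.filter (fun j : Fin N => (j : ℕ) < i ∧ c j = x)).card : ℝ) / i

open Finset Filter

lemma ind_nonneg (p : Prop) : 0 ≤ ind p := by
  unfold ind; split <;> norm_num

lemma ind_mono {p q : Prop} (h : p → q) : ind p ≤ ind q := by
  unfold ind; split_ifs <;> simp_all

lemma ind_exists_le_sum {ι : Type*} (s : Finset ι) (p : ι → Prop) :
    ind (∃ i ∈ s, p i) ≤ ∑ i ∈ s, ind (p i) := by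
  by_cases h : ∃ i ∈ s, p i
  · obtain ⟨i, hi, hpi⟩ := h
    calc ind (∃ i ∈ s, p i) = ind (p i) := by rw [ind, ind, if_pos ⟨i, hi, hpi⟩, if_pos hpi]
      _ ≤ ∑ i ∈ s, ind (p i) := single_le_sum (fun j _ => ind_nonneg (p j)) hi
  · rw [ind, if_neg h]
    exact sum_nonneg fun j _ => ind_nonneg _

lemma ind_lt_sum_le_sum_ind {ι : Type*} (s : Finset ι) {ε : ℝ} (hε : 0 ≤ ε) (f : ι → ℝ) :
    ind (ε < ∑ i ∈ s, f i) ≤ ∑ i ∈ s, ind (ε / #s < f i) := by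
  refine (ind_mono fun h => exists_lt_of_sum_lt ?_).trans (ind_exists_le_sum s _)
  calc ∑ _i ∈ s, ε / #s = #s * (ε / #s) := by rw [sum_const, nsmul_eq_mul]
    _ ≤ ε := by
      rcases eq_or_ne (#s : ℝ) 0 with hs | hs
      · rw [hs, zero_mul]; exact hε
      · rw [mul_div_cancel₀ _ hs]
    _ < ∑ i ∈ s, f i := h

lemma ind_lt_abs_le_pow_four {δ : ℝ} (hδ : 0 < δ) (z : ℝ) : ind (δ < |z|) ≤ z ^ 4 / δ ^ 4 := by
  by_cases h : δ < |z|
  · rw [ind, if_pos h, one_le_div (by positivity), ← Even.pow_abs ⟨2, rfl⟩ z]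
    exact pow_le_pow_left₀ hδ.le h.le 4
  · rw [ind, if_neg h]
    positivity

section Expectation

variable [Fintype X] {P : X → ℝ} {N : ℕ}

noncomputable def piExpect (P : X → ℝ) (f : (Fin N → X) → ℝ) : ℝ :=
  ∑ c, (∏ j, P (c j)) * f c

lemma piExpect_nonneg (hP : ∀ a, 0 ≤ P a) {f : (Fin N → X) → ℝ} (hf : ∀ c, 0 ≤ f c) :
    0 ≤ piExpect P f :=
  sum_nonneg fun c _ => mul_nonneg (prod_nonneg fun _ _ => hP _) (hf c)

lemma piExpect_mono (hP : ∀ a, 0 ≤ P a) {f g : (Fin N → X) → ℝ} (h : ∀ c, f c ≤ g c) :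
    piExpect P f ≤ piExpect P g :=
  sum_le_sum fun c _ => mul_le_mul_of_nonneg_left (h c) (prod_nonneg fun _ _ => hP _)

lemma piExpect_add (f g : (Fin N → X) → ℝ) :
    piExpect P (fun c => f c + g c) = piExpect P f + piExpect P g := by
  simp only [piExpect, mul_add, sum_add_distrib]

lemma piExpect_const_mul (a : ℝ) (f : (Fin N → X) → ℝ) :
    piExpect P (fun c => a * f c) = a * piExpect P f := by
  simp only [piExpect, mul_sum, mul_left_comm]

lemma piExpect_div_const (f : (Fin N → X) → ℝ) (a : ℝ) :
    piExpect P (fun c => f c / a) = piExpect P f / a := by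
  simp only [piExpect, sum_div, mul_div_assoc]

lemma piExpect_sum {ι : Type*} (s : Finset ι) (f : ι → (Fin N → X) → ℝ) :
    piExpect P (fun c => ∑ i ∈ s, f i c) = ∑ i ∈ s, piExpect P (f i) := by
  simp only [piExpect, mul_sum]
  exact sum_comm

lemma piExpect_succ (f : (Fin (N + 1) → X) → ℝ) :
    piExpect P f = piExpect P (fun c => ∑ a, P a * f (Fin.snoc c a)) := by
  unfold piExpect
  rw [← (Fin.snocEquiv fun _ => X).sum_comp, Fintype.sum_prod_type_right]
  refine sum_congr rfl fun c _ => ?_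
  simp only [Fin.snocEquiv_apply, Fin.prod_univ_castSucc, Fin.snoc_castSucc, Fin.snoc_last,
    mul_sum]
  exact sum_congr rfl fun a _ => mul_assoc _ _ _

lemma piExpect_const (hP : ∑ a, P a = 1) (a : ℝ) : piExpect P (fun _ : Fin N → X => a) = a := by
  induction N with
  | zero => simp [piExpect]
  | succ N ih => rw [piExpect_succ]; simp only [← sum_mul, hP, one_mul]; exact ih

lemma piExpect_comp_castLE (hP : ∑ a, P a = 1) {i : ℕ} (h : i ≤ N) (f : (Fin i → X) → ℝ) :
    piExpect P (fun c : Fin N → X => f (fun k => c (Fin.castLE h k))) = piExpect P f := by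
  induction N, h using Nat.le_induction with
  | base => simp
  | succ N hiN ih =>
    rw [piExpect_succ, ← ih]
    congr 1
    funext c
    have hsnoc : ∀ a, (fun k => (Fin.snoc c a : Fin (N + 1) → X)
        (Fin.castLE (hiN.trans N.le_succ) k)) = fun k => c (Fin.castLE hiN k) :=
      fun a => funext fun k =>
        Fin.snoc_castSucc (α := fun _ => X) (p := c) (x := a) (i := Fin.castLE hiN k)
    simp only [hsnoc, ← sum_mul, hP, one_mul]

end Expectation

section Moments

variable [Fintype X] {P : X → ℝ} {g : X → ℝ}

lemma sum_mul_affine (hP : ∑ a, P a = 1) (hg : ∑ a, P a * g a = 0) (u v : ℝ) :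
    ∑ a, P a * (u + v * g a) = u := by
  simp only [mul_add, sum_add_distrib, ← sum_mul, hP, one_mul, mul_left_comm (P _) v, ← mul_sum,
    hg, mul_zero, add_zero]

lemma sum_mul_add_sq_le (hP : IsDist P) (hg : ∑ a, P a * g a = 0) (hg1 : ∀ a, |g a| ≤ 1)
    (s : ℝ) : ∑ a, P a * (s + g a) ^ 2 ≤ s ^ 2 + 1 := by
  calc ∑ a, P a * (s + g a) ^ 2 ≤ ∑ a, P a * ((s ^ 2 + 1) + 2 * s * g a) := by
        refine sum_le_sum fun a _ => mul_le_mul_of_nonneg_left ?_ (hP.1 a)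
        nlinarith [sq_le_one_iff_abs_le_one (g a) |>.mpr (hg1 a)]
    _ = s ^ 2 + 1 := sum_mul_affine hP.2 hg _ _

/-- Pointwise `(s + g)⁴ ≤ s⁴ + 8 s² + 3 + 4 s³ g` for `g² ≤ 1` (bound `4 s g³ ≤ 2 s² + 2 g⁶`);
averaging over `P` removes the last term. -/
lemma sum_mul_add_pow_four_le (hP : IsDist P) (hg : ∑ a, P a * g a = 0) (hg1 : ∀ a, |g a| ≤ 1)
    (s : ℝ) : ∑ a, P a * (s + g a) ^ 4 ≤ s ^ 4 + 8 * s ^ 2 + 3 := by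
  calc ∑ a, P a * (s + g a) ^ 4 ≤ ∑ a, P a * ((s ^ 4 + 8 * s ^ 2 + 3) + 4 * s ^ 3 * g a) := by
        refine sum_le_sum fun a _ => mul_le_mul_of_nonneg_left ?_ (hP.1 a)
        have hg2 : g a ^ 2 ≤ 1 := sq_le_one_iff_abs_le_one (g a) |>.mpr (hg1 a)
        nlinarith [mul_nonneg (sq_nonneg s) (sub_nonneg.mpr hg2), sq_nonneg (s - g a ^ 3),
          pow_le_one₀ (sq_nonneg (g a)) hg2 (n := 3), sq_nonneg (g a)]
    _ = s ^ 4 + 8 * s ^ 2 + 3 := sum_mul_affine hP.2 hg _ _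

lemma piExpect_sum_sq_le (hP : IsDist P) (hg : ∑ a, P a * g a = 0) (hg1 : ∀ a, |g a| ≤ 1)
    (n : ℕ) : piExpect P (fun c : Fin n → X => (∑ k, g (c k)) ^ 2) ≤ n := by
  induction n with
  | zero => simp [piExpect]
  | succ n ih =>
    rw [piExpect_succ]
    simp only [Fin.sum_univ_castSucc, Fin.snoc_castSucc, Fin.snoc_last]
    calc _ ≤ piExpect P (fun c : Fin n → X => (∑ k, g (c k)) ^ 2 + 1) :=
          piExpect_mono hP.1 fun c => sum_mul_add_sq_le hP hg hg1 _
      _ ≤ (n + 1 : ℕ) := by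
          rw [piExpect_add, piExpect_const hP.2]
          push_cast
          linarith

lemma piExpect_sum_pow_four_le (hP : IsDist P) (hg : ∑ a, P a * g a = 0)
    (hg1 : ∀ a, |g a| ≤ 1) (n : ℕ) :
    piExpect P (fun c : Fin n → X => (∑ k, g (c k)) ^ 4) ≤ 4 * n ^ 2 := by
  induction n with
  | zero => simp [piExpect]
  | succ n ih =>
    rw [piExpect_succ]
    simp only [Fin.sum_univ_castSucc, Fin.snoc_castSucc, Fin.snoc_last]
    calc _ ≤ piExpect P (fun c : Fin n → X => (∑ k, g (c k)) ^ 4 + 8 * (∑ k, g (c k)) ^ 2 + 3) :=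
          piExpect_mono hP.1 fun c => sum_mul_add_pow_four_le hP hg hg1 _
      _ ≤ 4 * ((n + 1 : ℕ) : ℝ) ^ 2 := by
          rw [piExpect_add, piExpect_add, piExpect_const_mul, piExpect_const hP.2]
          have := piExpect_sum_sq_le hP hg hg1 n
          push_cast
          nlinarith

end Moments

lemma empPrefix_sub_eq {N i : ℕ} (h : i ≤ N) (hi : 0 < i) (c : Fin N → X) (x : X) (p : ℝ) :
    empPrefix c i x - p = (∑ k : Fin i, (ind (c (Fin.castLE h k) = x) - p)) / i := by
  classical
  have hcard : univ.filter (fun j : Fin N => (j : ℕ) < i ∧ c j = x)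
      = (univ.filter fun k : Fin i => c (Fin.castLE h k) = x).map (Fin.castLEEmb h) := by
    ext j
    simp only [mem_filter, mem_univ, true_and, Finset.mem_map, Fin.castLEEmb_apply]
    constructor
    · rintro ⟨hj, rfl⟩
      exact ⟨⟨j, hj⟩, rfl, rfl⟩
    · rintro ⟨k, rfl, rfl⟩
      exact ⟨k.2, rfl⟩
  have hi' : (i : ℝ) ≠ 0 := by positivity
  rw [empPrefix, sum_sub_distrib, sum_const, card_univ, Fintype.card_fin, nsmul_eq_mul,
    hcard, card_map, natCast_card_filter]
  field_simp
  simp [ind]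

lemma abs_ind_sub_le_one {t : ℝ} (h0 : 0 ≤ t) (h1 : t ≤ 1) (p : Prop) : |ind p - t| ≤ 1 := by
  rw [abs_le]
  unfold ind
  split_ifs <;> constructor <;> linarith

section Empirical

variable [Fintype X] {P : X → ℝ}

lemma IsDist.le_one (hP : IsDist P) (x : X) : P x ≤ 1 :=
  hP.2 ▸ single_le_sum (fun a _ => hP.1 a) (mem_univ x)

lemma sum_mul_centred_ind_eq_zero (hP : ∑ a, P a = 1) (x : X) :
    ∑ a, P a * (ind (a = x) - P x) = 0 := by
  have hmean : ∑ a, P a * ind (a = x) = P x := by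
    rw [sum_eq_single x] <;> simp_all [ind]
  simp only [mul_sub, sum_sub_distrib, hmean, ← sum_mul, hP, one_mul, sub_self]

lemma piExpect_ind_lt_abs_sub_empPrefix_le (hP : IsDist P) (x : X) {N i : ℕ} (hiN : i ≤ N)
    (hi : 0 < i) {δ : ℝ} (hδ : 0 < δ) :
    piExpect P (fun c : Fin N → X => ind (δ < |P x - empPrefix c i x|))
      ≤ 4 / (i ^ 2 * δ ^ 4) := by
  set g : X → ℝ := fun a => ind (a = x) - P x
  have hg : ∑ a, P a * g a = 0 := sum_mul_centred_ind_eq_zero hP.2 x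
  have hg1 : ∀ a, |g a| ≤ 1 := fun a => abs_ind_sub_le_one (hP.1 x) (hP.le_one x) _
  have hi' : (0 : ℝ) < i := by exact_mod_cast hi
  calc _ ≤ piExpect P (fun c : Fin N → X =>
          (∑ k : Fin i, g (c (Fin.castLE hiN k))) ^ 4 / (i ^ 4 * δ ^ 4)) := by
        refine piExpect_mono hP.1 fun c => ?_
        have := ind_lt_abs_le_pow_four hδ (empPrefix c i x - P x)
        rwa [abs_sub_comm, empPrefix_sub_eq hiN hi, div_pow, div_div] at this
    _ = piExpect P (fun c : Fin i → X => (∑ k, g (c k)) ^ 4) / (i ^ 4 * δ ^ 4) := by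
        rw [piExpect_div_const, piExpect_comp_castLE hP.2 hiN (fun c => (∑ k, g (c k)) ^ 4)]
    _ ≤ 4 * i ^ 2 / (i ^ 4 * δ ^ 4) := by
        gcongr
        exact piExpect_sum_pow_four_le hP hg hg1 i
    _ = 4 / (i ^ 2 * δ ^ 4) := by
        field_simp

lemma piExpect_ind_lt_sum_abs_sub_empPrefix_le (hP : IsDist P) {N i : ℕ} (hiN : i ≤ N)
    (hi : 0 < i) {ε : ℝ} (hε : 0 < ε) :
    piExpect P (fun c : Fin N → X => ind (ε < ∑ x, |P x - empPrefix c i x|))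
      ≤ 4 * Fintype.card X ^ 5 / (i ^ 2 * ε ^ 4) := by
  calc _ ≤ piExpect P (fun c : Fin N → X =>
          ∑ x, ind (ε / Fintype.card X < |P x - empPrefix c i x|)) :=
        piExpect_mono hP.1 fun c => by
          simpa using ind_lt_sum_le_sum_ind univ hε.le fun x => |P x - empPrefix c i x|
    _ ≤ ∑ _x : X, 4 / (i ^ 2 * (ε / Fintype.card X) ^ 4) := by
        rw [piExpect_sum]
        refine sum_le_sum fun x _ => piExpect_ind_lt_abs_sub_empPrefix_le hP x hiN hi ?_
        have : 0 < Fintype.card X := Fintype.card_pos_iff.mpr ⟨x⟩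
        positivity
    _ = 4 * Fintype.card X ^ 5 / (i ^ 2 * ε ^ 4) := by
        rw [sum_const, card_univ, nsmul_eq_mul]
        rcases eq_or_ne (Fintype.card X : ℝ) 0 with hK | hK
        · simp [hK]
        · field_simp

lemma piExpect_ind_exists_prefix_le (hP : IsDist P) (N : ℕ) {m ε : ℝ} (hm : 0 < m)
    (hε : 0 < ε) :
    piExpect P (fun c : Fin N → X =>
        ind (∃ i : ℕ, m ≤ i ∧ i ≤ N ∧ ε < ∑ x, |P x - empPrefix c i x|))
      ≤ (N + 1) * (4 * Fintype.card X ^ 5 / (m ^ 2 * ε ^ 4)) := by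
  calc _ ≤ piExpect P (fun c : Fin N → X =>
          ∑ i ∈ range (N + 1), ind (m ≤ i ∧ ε < ∑ x, |P x - empPrefix c i x|)) := by
        refine piExpect_mono hP.1 fun c => (ind_mono ?_).trans (ind_exists_le_sum _ _)
        rintro ⟨i, hmi, hiN, hεi⟩
        exact ⟨i, mem_range.mpr (Nat.lt_succ_of_le hiN), hmi, hεi⟩
    _ ≤ ∑ _i ∈ range (N + 1), 4 * Fintype.card X ^ 5 / (m ^ 2 * ε ^ 4) := by
        rw [piExpect_sum]
        refine sum_le_sum fun i hi => ?_
        by_cases hmi : m ≤ i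
        · have hi0 : 0 < i := by exact_mod_cast hm.trans_le hmi
          calc _ ≤ piExpect P (fun c : Fin N → X => ind (ε < ∑ x, |P x - empPrefix c i x|)) :=
                piExpect_mono hP.1 fun c => ind_mono And.right
            _ ≤ 4 * Fintype.card X ^ 5 / (i ^ 2 * ε ^ 4) :=
                piExpect_ind_lt_sum_abs_sub_empPrefix_le hP
                  (Nat.lt_succ_iff.mp (mem_range.mp hi)) hi0 hε
            _ ≤ _ := by gcongr
        · calc _ ≤ piExpect P (fun _ : Fin N → X => 0) :=
                piExpect_mono hP.1 fun c => by simp [ind, hmi]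
            _ = 0 := piExpect_const hP.2 0
            _ ≤ _ := by positivity
    _ = _ := by
        rw [sum_const, card_range, nsmul_eq_mul]
        push_cast
        ring

end Empirical

lemma tendsto_log_pow_div_natCast_atTop (k : ℕ) :
    Tendsto (fun N : ℕ => Real.log N ^ k / N) atTop (nhds 0) := by
  simpa [Function.comp_def] using (Real.tendsto_pow_log_div_mul_add_atTop 1 0 k one_ne_zero).comp
    tendsto_natCast_atTop_atTop

/-- **Lemma 5 (prefix condition).** If `C₁,…,C_N` are i.i.d. `P`, the probability
that some prefix of length `i` with `N/ln N ≤ i ≤ N` has empirical distribution at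
`L¹`-distance more than `1/ln N` from `P` tends to `0` as `N → ∞`. -/
theorem prefix_condition [Fintype X] (P : X → ℝ) (hP : IsDist P) :
    Filter.Tendsto
      (fun N : ℕ =>
        ∑ c : Fin N → X, (∏ j, P (c j)) *
          ind (∃ i : ℕ, (N : ℝ) / Real.log N ≤ (i : ℝ) ∧ i ≤ N ∧
            1 / Real.log N < ∑ x, |P x - empPrefix c i x|))
      Filter.atTop (nhds 0) := by
  set K : ℝ := (Fintype.card X : ℝ)
  have hbound : ∀ᶠ N : ℕ in atTop,
      piExpect P (fun c : Fin N → X => ind (∃ i : ℕ, (N : ℝ) / Real.log N ≤ (i : ℝ) ∧ i ≤ N ∧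
        1 / Real.log N < ∑ x, |P x - empPrefix c i x|)) ≤ 8 * K ^ 5 * (Real.log N ^ 6 / N) := by
    filter_upwards [eventually_ge_atTop 2] with N hN
    have hN' : (2 : ℝ) ≤ N := by exact_mod_cast hN
    have hlog : 0 < Real.log N := Real.log_pos (by linarith)
    have hinv : 1 / (N : ℝ) ≤ 1 := by rw [div_le_one (by positivity)]; linarith
    calc _ ≤ (N + 1) * (4 * K ^ 5 / ((N / Real.log N) ^ 2 * (1 / Real.log N) ^ 4)) :=
          piExpect_ind_exists_prefix_le hP N (by positivity) (by positivity)
      _ = (1 + 1 / N) * (4 * K ^ 5) * (Real.log N ^ 6 / N) := by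
          field_simp
      _ ≤ 2 * (4 * K ^ 5) * (Real.log N ^ 6 / N) := by
          gcongr
          linarith
      _ = 8 * K ^ 5 * (Real.log N ^ 6 / N) := by ring
  refine squeeze_zero' (Eventually.of_forall fun N => piExpect_nonneg hP.1 fun c => ind_nonneg _)
    hbound ?_
  simpa using (tendsto_log_pow_div_natCast_atTop 6).const_mul (8 * K ^ 5)

end Async
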